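/- Let G be a graph, f : V(G) → {1, 0, 0̂} a colouring, v a fixed vertex, and for each colour i let S_{v=i} denote a minimum f_{v=i}-respecting simultaneous dominating set (where f_{v=i} agrees with f except f_{v=i}(v) = i). Then |S_{v=0}| ≤ |S_{v=0̂}| ≤ |S_{v=1}| and |S_{v=1}| − |S_{v=0}| ≤ 1. -/

import Mathlib

/-!
Recolouring `v` from `0` to `0̂` to `1` only strengthens the constraint at `v`, so every
respecting set for the stronger colouring respects the weaker one and the minimum sizes increase.
Conversely, adding `v` to an `f_{v=0}`-respecting set gives an `f_{v=1}`-respecting set, since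
enlarging a set preserves simultaneous domination; hence `|S_{v=1}| ≤ |S_{v=0}| + 1`.
-/

open SimpleGraph

variable {V : Type*}

/-- Number of connected components of a graph. -/
noncomputable def numComponents (G : SimpleGraph V) : ℕ := Nat.card G.ConnectedComponent

/-- A vertex is a cut vertex if its removal increases the number of connected components. -/
def IsCutVertex (G : SimpleGraph V) (v : V) : Prop :=
  numComponents G < numComponents (G.induce {u | u ≠ v})

/-- `T` is a spanning tree of `G`: a subgraph on all vertices of `G` that is a tree. -/
def IsSpanningTree (G T : SimpleGraph V) : Prop := T ≤ G ∧ T.IsTree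

/-- `v` is dominated by `S` in the graph `T`. -/
def DominatedIn (T : SimpleGraph V) (S : Set V) (v : V) : Prop :=
  v ∈ S ∨ ∃ u ∈ S, T.Adj v u

/-- `v` is simultaneously dominated by `S`: dominated in every spanning tree of `G`. -/
def SimDominated (G : SimpleGraph V) (S : Set V) (v : V) : Prop :=
  ∀ T : SimpleGraph V, IsSpanningTree G T → DominatedIn T S v

/-- `S` is a simultaneous dominating set of `G`. -/
def IsSDSet (G : SimpleGraph V) (S : Set V) : Prop := ∀ v, SimDominated G S v

/-- `C` is a vertex cover of `G`. -/
def IsVertexCover (G : SimpleGraph V) (C : Set V) : Prop :=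
  ∀ ⦃u v : V⦄, G.Adj u v → u ∈ C ∨ v ∈ C

/-- A block of `G`: a maximal vertex set inducing a connected subgraph without cut vertices. -/
def IsBlock (G : SimpleGraph V) (B : Set V) : Prop :=
  B.Nonempty ∧ (G.induce B).Connected ∧ (∀ x, ¬ IsCutVertex (G.induce B) x) ∧
    ∀ B' : Set V, B ⊆ B' → (G.induce B').Connected →
      (∀ x, ¬ IsCutVertex (G.induce B') x) → B' = B

/-- 2-connected: connected, at least 3 vertices, no cut vertex. -/
def TwoConnected (G : SimpleGraph V) [Fintype V] : Prop :=
  G.Connected ∧ 3 ≤ Fintype.card V ∧ ∀ v, ¬ IsCutVertex G v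

/-- Colours 1, 0, 0̂. -/
inductive Col : Type
  | one | zero | zhat
deriving DecidableEq

/-- `S` is an `f`-respecting simultaneous dominating set of `G`. -/
def RespSDS (G : SimpleGraph V) (f : V → Col) (S : Set V) : Prop :=
  (∀ v, f v = Col.one → v ∈ S) ∧ ∀ v, f v = Col.zhat → SimDominated G S v

/-- A minimum `f`-respecting simultaneous dominating set. -/
def MinRespSDS (G : SimpleGraph V) (f : V → Col) (S : Set V) : Prop :=
  RespSDS G f S ∧ ∀ S' : Set V, RespSDS G f S' → S.ncard ≤ S'.ncard

-- Colours ordered by the strength of the constraint they impose: `0 < 0̂ < 1`.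
def Col.rank : Col → ℕ
  | .zero => 0
  | .zhat => 1
  | .one => 2

instance : Preorder Col := Preorder.lift Col.rank

theorem Col.zero_le_zhat : Col.zero ≤ Col.zhat := by decide

theorem Col.zhat_le_one : Col.zhat ≤ Col.one := by decide

theorem Col.eq_one_of_one_le {c : Col} : Col.one ≤ c → c = Col.one := by
  cases c <;> decide

theorem Col.zhat_le_iff {c : Col} : Col.zhat ≤ c ↔ c = Col.zhat ∨ c = Col.one := by
  cases c <;> decide

theorem SimDominated.mono {G : SimpleGraph V} {S S' : Set V} {v : V} (h : SimDominated G S v)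
    (hSS' : S ⊆ S') : SimDominated G S' v := fun T hT =>
  (h T hT).imp (fun hv => hSS' hv) fun ⟨u, hu, hadj⟩ => ⟨u, hSS' hu, hadj⟩

theorem RespSDS.of_le {G : SimpleGraph V} {f g : V → Col} {S : Set V} (h : RespSDS G g S)
    (hfg : f ≤ g) : RespSDS G f S := by
  refine ⟨fun u hu => h.1 u (Col.eq_one_of_one_le (hu ▸ hfg u)), fun u hu => ?_⟩
  rcases Col.zhat_le_iff.1 (hu ▸ hfg u) with hgu | hgu
  · exact h.2 u hgu
  · exact fun _ _ => Or.inl (h.1 u hgu)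

theorem MinRespSDS.ncard_le_of_le {G : SimpleGraph V} {f g : V → Col} {S S' : Set V}
    (h : MinRespSDS G f S) (h' : MinRespSDS G g S') (hfg : f ≤ g) : S.ncard ≤ S'.ncard :=
  h.2 S' (h'.1.of_le hfg)

theorem RespSDS.update_one_insert [DecidableEq V] {G : SimpleGraph V} {f : V → Col} {S : Set V}
    (h : RespSDS G f S) (v : V) : RespSDS G (Function.update f v Col.one) (insert v S) := by
  refine ⟨fun u hu => ?_, fun u hu => ?_⟩
  · rcases eq_or_ne u v with rfl | hne
    · exact Set.mem_insert u S
    · exact Set.mem_insert_of_mem v (h.1 u (by rwa [Function.update_of_ne hne] at hu))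
  · rcases eq_or_ne u v with rfl | hne
    · simp at hu
    · exact (h.2 u (by rwa [Function.update_of_ne hne] at hu)).mono (Set.subset_insert v S)

theorem stmt8_general [DecidableEq V] (G : SimpleGraph V) (f : V → Col) (v : V)
    (S0 S0h S1 : Set V)
    (h0 : MinRespSDS G (Function.update f v Col.zero) S0)
    (h0h : MinRespSDS G (Function.update f v Col.zhat) S0h)
    (h1 : MinRespSDS G (Function.update f v Col.one) S1) :
    S0.ncard ≤ S0h.ncard ∧ S0h.ncard ≤ S1.ncard ∧ S1.ncard ≤ S0.ncard + 1 := by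
  refine ⟨h0.ncard_le_of_le h0h (Function.update_mono Col.zero_le_zhat),
    h0h.ncard_le_of_le h1 (Function.update_mono Col.zhat_le_one), ?_⟩
  calc S1.ncard ≤ (insert v S0).ncard :=
        h1.2 _ (by simpa only [Function.update_idem] using h0.1.update_one_insert v)
    _ ≤ S0.ncard + 1 := Set.ncard_insert_le v S0

/-- With `S_{v=i}` a minimum `f_{v=i}`-respecting SD-set (where `f_{v=i}` agrees
with `f` except at `v`), we have `|S_{v=0}| ≤ |S_{v=0̂}| ≤ |S_{v=1}|` and
`|S_{v=1}| - |S_{v=0}| ≤ 1`. -/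
theorem stmt8 [Fintype V] [DecidableEq V] (G : SimpleGraph V) (f : V → Col) (v : V)
    (S0 S0h S1 : Set V)
    (h0 : MinRespSDS G (Function.update f v Col.zero) S0)
    (h0h : MinRespSDS G (Function.update f v Col.zhat) S0h)
    (h1 : MinRespSDS G (Function.update f v Col.one) S1) :
    S0.ncard ≤ S0h.ncard ∧ S0h.ncard ≤ S1.ncard ∧ S1.ncard ≤ S0.ncard + 1 :=
  stmt8_general G f v S0 S0h S1 h0 h0h h1
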